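/- Let X be a stationary field on ℤ^d with mean μ, absolutely summable covariance (constant c with E(∑_{rect}(X_k-μ))^2 ≤ c·|rect| for all rectangles), and sample mean X̄_n over A_n = {1,…,n}^d. With r̂(j) the empirical covariance using X̄_n and r̃(j) the empirical covariance using μ, one has E|r̂(j) - r̃(j)| ≤ E(X̄_n - μ)^2 + 2 n^{-d/2} √(c·E(X̄_n - μ)^2) for every j ∈ B_{n-1}, and hence ∑_{j ∈ B_{q-1}} E|r̂(j) - r̃(j)| ≤ (2q-1)^d (E(X̄_n-μ)^2 + 2 n^{-d/2}√(c·E(X̄_n-μ)^2)). -/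

import Mathlib

/-!
Writing `u = X̄_n - μ`, the two empirical covariances differ by
`n^{-d} (#S u² - u (∑_S (X_k - μ) + ∑_S (X_{k+|j|} - μ)))`, where `S ⊆ A_n` is the rectangle of
summation. Since `#S ≤ n^d` and both partial sums run over rectangles inside `A_n`, Cauchy–Schwarz
bounds the expectation of each cross term by `√(E u²) √(c n^d)`. Summing the resulting uniform
bound over the `(2q-1)^d` lags of `B_{q-1}` gives the second claim.
-/

open MeasureTheory Finset

theorem integral_abs_mul_le_sqrt_mul_sqrt {α : Type*} [MeasurableSpace α] {ν : Measure α}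
    {f g : α → ℝ} (hf : MemLp f 2 ν) (hg : MemLp g 2 ν) :
    ∫ x, |f x * g x| ∂ν ≤ √(∫ x, f x ^ 2 ∂ν) * √(∫ x, g x ^ 2 ∂ν) := by
  have h := integral_mul_norm_le_Lp_mul_Lq Real.HolderConjugate.two_two
    (by simpa using hf) (by simpa using hg)
  simpa [Real.norm_eq_abs, abs_mul, Real.sqrt_eq_rpow, Real.rpow_two] using h

theorem Pi.card_Icc_int {ι : Type*} [Fintype ι] [DecidableEq ι] {s t : ι → ℤ} (h : s ≤ t) :
    (#(Icc s t) : ℤ) = ∏ i, (t i - s i + 1) := by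
  rw [Pi.card_Icc, Nat.cast_prod]
  refine prod_congr rfl fun i _ => ?_
  rw [Int.card_Icc, Int.toNat_of_nonneg (by linarith [h i])]
  ring

theorem sqrt_mul_sqrt_mul_pow_div_pow {n : ℝ} (hn : 0 < n) (d : ℕ) (c : ℝ) {a : ℝ} (ha : 0 ≤ a) :
    √a * √(c * n ^ d) / n ^ d = n ^ (-(d : ℝ) / 2) * √(c * a) := by
  have hsqrt : √(n ^ d) = n ^ ((d : ℝ) / 2) := by
    rw [Real.sqrt_eq_rpow, ← Real.rpow_natCast, ← Real.rpow_mul hn.le]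
    ring_nf
  rw [← Real.sqrt_mul ha, mul_left_comm, ← mul_assoc, Real.sqrt_mul' _ (by positivity), hsqrt,
    ← Real.rpow_natCast, mul_div_assoc, ← Real.rpow_sub hn]
  ring_nf

section Recentering

variable {ι : Type*} (S : Finset ι) (a b : ι → ℝ) (m μ : ℝ)

theorem sum_sub_mul_sub_sub_sum_sub_mul_sub :
    ∑ k ∈ S, (a k - m) * (b k - m) - ∑ k ∈ S, (a k - μ) * (b k - μ)
      = #S * (m - μ) ^ 2 - (m - μ) * (∑ k ∈ S, (a k - μ) + ∑ k ∈ S, (b k - μ)) := by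
  rw [← sum_sub_distrib, mul_add, mul_sum, mul_sum, ← sum_add_distrib, ← nsmul_eq_mul,
    ← sum_const, ← sum_sub_distrib]
  exact sum_congr rfl fun k _ => by ring

theorem abs_sum_sub_mul_sub_sub_sum_sub_mul_sub_le {N : ℝ} (hS : (#S : ℝ) ≤ N) :
    |∑ k ∈ S, (a k - m) * (b k - m) - ∑ k ∈ S, (a k - μ) * (b k - μ)|
      ≤ N * (m - μ) ^ 2 + (|(m - μ) * ∑ k ∈ S, (a k - μ)| + |(m - μ) * ∑ k ∈ S, (b k - μ)|) := by
  rw [sum_sub_mul_sub_sub_sum_sub_mul_sub, mul_add]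
  refine (abs_sub _ _).trans (add_le_add ?_ (abs_add_le _ _))
  rw [abs_of_nonneg (by positivity)]
  exact mul_le_mul_of_nonneg_right hS (sq_nonneg _)

end Recentering

section RandomField

variable {Ω : Type*} {d : ℕ} {X : (Fin d → ℤ) → Ω → ℝ} {μ c : ℝ}

/-- `r̂(j)` is `empiricalCov X n X̄_n |j|` and `r̃(j)` is `empiricalCov X n (fun _ => μ) |j|`. -/
noncomputable def empiricalCov (X : (Fin d → ℤ) → Ω → ℝ) (n : ℕ) (m : Ω → ℝ) (v : Fin d → ℤ)
    (ω : Ω) : ℝ :=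
  (∑ k ∈ Icc 1 (fun i => (n : ℤ) - v i), (X k ω - m ω) * (X (k + v) ω - m ω)) / (n : ℝ) ^ d

theorem card_Icc_one_const (n : ℕ) : #(Icc (1 : Fin d → ℤ) fun _ => (n : ℤ)) = n ^ d := by
  simp [Pi.card_Icc]

theorem card_Icc_neg_const {q : ℕ} (hq : 1 ≤ q) :
    #(Icc (fun _ => -((q : ℤ) - 1)) (fun _ => (q : ℤ) - 1) : Finset (Fin d → ℤ))
      = (2 * q - 1) ^ d := by
  simp only [Pi.card_Icc, Int.card_Icc, prod_const, card_univ, Fintype.card_fin]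
  congr 1
  omega

theorem card_Icc_le_pow {n : ℕ} {s t : Fin d → ℤ} (hs : 1 ≤ s) (ht : t ≤ fun _ => (n : ℤ)) :
    (#(Icc s t) : ℝ) ≤ (n : ℝ) ^ d := by
  exact_mod_cast card_Icc_one_const (d := d) n ▸ card_le_card (Icc_subset_Icc hs ht)

theorem abs_empiricalCov_sub_le {n : ℕ} (hn : 0 < n) {v : Fin d → ℤ} (hv : 0 ≤ v) (m : Ω → ℝ)
    (ω : Ω) :
    |empiricalCov X n m v ω - empiricalCov X n (fun _ => μ) v ω|
      ≤ (m ω - μ) ^ 2 + (|(m ω - μ) * ∑ k ∈ Icc 1 (fun i => (n : ℤ) - v i), (X k ω - μ)|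
        + |(m ω - μ) * ∑ k ∈ Icc (1 + v) (fun _ => (n : ℤ)), (X k ω - μ)|) / (n : ℝ) ^ d := by
  have hN : 0 < (n : ℝ) ^ d := by positivity
  have hshift : ∑ k ∈ Icc 1 (fun i => (n : ℤ) - v i), (X (k + v) ω - μ)
      = ∑ k ∈ Icc (1 + v) (fun _ => (n : ℤ)), (X k ω - μ) := by
    rw [show (fun _ => (n : ℤ)) = (fun i => (n : ℤ) - v i) + v by ext; simp,
      ← map_add_right_Icc, sum_map]
    rfl
  rw [empiricalCov, empiricalCov, div_sub_div_same, abs_div, abs_of_pos hN, ← hshift]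
  calc _ ≤ ((n : ℝ) ^ d * (m ω - μ) ^ 2
        + (|(m ω - μ) * ∑ k ∈ Icc 1 (fun i => (n : ℤ) - v i), (X k ω - μ)|
          + |(m ω - μ) * ∑ k ∈ Icc 1 (fun i => (n : ℤ) - v i), (X (k + v) ω - μ)|))
        / (n : ℝ) ^ d := by
        gcongr
        exact abs_sum_sub_mul_sub_sub_sum_sub_mul_sub_le _ (fun k => X k ω) (fun k => X (k + v) ω)
          (m ω) μ (card_Icc_le_pow le_rfl fun i => by simpa using hv i)
    _ = _ := by rw [add_div, mul_div_cancel_left₀ _ hN.ne']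

variable [MeasureSpace Ω]

theorem memLp_sum_sub {ι : Type*} {X : ι → Ω → ℝ} (hmeas : ∀ k, Measurable (X k))
    (hsq : ∀ k, Integrable (fun ω => (X k ω - μ) * (X k ω - μ))) (S : Finset ι) :
    MemLp (fun ω => ∑ k ∈ S, (X k ω - μ)) 2 :=
  memLp_finsetSum S fun k _ =>
    (memLp_two_iff_integrable_sq (f := fun ω => X k ω - μ)
      ((hmeas k).sub measurable_const).aestronglyMeasurable).2 (by simpa only [sq] using hsq k)

theorem integral_sq_sum_Icc_le
    (hrect : ∀ s t : Fin d → ℤ, s ≤ t →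
      ∫ ω, (∑ k ∈ Icc s t, (X k ω - μ)) ^ 2 ≤ c * ∏ i, ((t i - s i + 1 : ℤ) : ℝ))
    (s t : Fin d → ℤ) :
    ∫ ω, (∑ k ∈ Icc s t, (X k ω - μ)) ^ 2 ≤ c * #(Icc s t) := by
  by_cases hst : s ≤ t
  · have hcard : (#(Icc s t) : ℝ) = ∏ i, ((t i - s i + 1 : ℤ) : ℝ) := by
      exact_mod_cast Pi.card_Icc_int hst
    rw [hcard]
    exact hrect s t hst
  · simp [Icc_eq_empty hst]

theorem integral_abs_mul_sum_Icc_le (hmeas : ∀ k, Measurable (X k))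
    (hsq : ∀ k, Integrable (fun ω => (X k ω - μ) * (X k ω - μ))) (hc : 0 ≤ c)
    (hrect : ∀ s t : Fin d → ℤ, s ≤ t →
      ∫ ω, (∑ k ∈ Icc s t, (X k ω - μ)) ^ 2 ≤ c * ∏ i, ((t i - s i + 1 : ℤ) : ℝ))
    {u : Ω → ℝ} (hu : MemLp u 2) {s t : Fin d → ℤ} {N : ℝ} (hN : (#(Icc s t) : ℝ) ≤ N) :
    ∫ ω, |u ω * ∑ k ∈ Icc s t, (X k ω - μ)| ≤ √(∫ ω, u ω ^ 2) * √(c * N) :=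
  (integral_abs_mul_le_sqrt_mul_sqrt hu (memLp_sum_sub hmeas hsq _)).trans <| by
    gcongr
    exact (integral_sq_sum_Icc_le hrect s t).trans (by gcongr)

theorem integral_abs_empiricalCov_sub_le (hmeas : ∀ k, Measurable (X k))
    (hsq : ∀ k, Integrable (fun ω => (X k ω - μ) * (X k ω - μ))) (hc : 0 ≤ c)
    (hrect : ∀ s t : Fin d → ℤ, s ≤ t →
      ∫ ω, (∑ k ∈ Icc s t, (X k ω - μ)) ^ 2 ≤ c * ∏ i, ((t i - s i + 1 : ℤ) : ℝ))
    {n : ℕ} (hn : 0 < n) {Xbar : Ω → ℝ}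
    (hXbar : ∀ ω, Xbar ω = (∑ k ∈ Icc (1 : Fin d → ℤ) (fun _ => (n : ℤ)), X k ω) / (n : ℝ) ^ d)
    {v : Fin d → ℤ} (hv : 0 ≤ v) :
    ∫ ω, |empiricalCov X n Xbar v ω - empiricalCov X n (fun _ => μ) v ω|
      ≤ (∫ ω, (Xbar ω - μ) ^ 2)
        + 2 * (n : ℝ) ^ (-(d : ℝ) / 2) * √(c * ∫ ω, (Xbar ω - μ) ^ 2) := by
  set A : Finset (Fin d → ℤ) := Icc 1 (fun _ => (n : ℤ))
  set S : Finset (Fin d → ℤ) := Icc 1 (fun i => (n : ℤ) - v i)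
  set S' : Finset (Fin d → ℤ) := Icc (1 + v) (fun _ => (n : ℤ))
  set N : ℝ := (n : ℝ) ^ d
  set E2 := ∫ ω, (Xbar ω - μ) ^ 2
  have hN : 0 < N := by positivity
  have hA : (#A : ℝ) = N := by simp only [A, N, card_Icc_one_const, Nat.cast_pow]
  have hcentre : ∀ ω, Xbar ω - μ = (∑ k ∈ A, (X k ω - μ)) / N := fun ω => by
    rw [hXbar, sum_sub_distrib, sum_const, nsmul_eq_mul, hA, sub_div,
      mul_div_cancel_left₀ _ hN.ne']
  have hu : MemLp (fun ω => Xbar ω - μ) 2 := by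
    simp_rw [hcentre, div_eq_mul_inv]
    exact (memLp_sum_sub hmeas hsq A).mul_const N⁻¹
  have hprod : ∀ T : Finset (Fin d → ℤ),
      Integrable fun ω => |(Xbar ω - μ) * ∑ k ∈ T, (X k ω - μ)| := fun T =>
    (hu.integrable_mul (memLp_sum_sub hmeas hsq T)).abs
  have hcross : Integrable fun ω => (|(Xbar ω - μ) * ∑ k ∈ S, (X k ω - μ)|
      + |(Xbar ω - μ) * ∑ k ∈ S', (X k ω - μ)|) / N := ((hprod S).add (hprod S')).div_const N
  calc _ ≤ ∫ ω, ((Xbar ω - μ) ^ 2 + (|(Xbar ω - μ) * ∑ k ∈ S, (X k ω - μ)|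
          + |(Xbar ω - μ) * ∑ k ∈ S', (X k ω - μ)|) / N) :=
        integral_mono_of_nonneg (.of_forall fun _ => abs_nonneg _)
          (hu.integrable_sq.add hcross) (.of_forall (abs_empiricalCov_sub_le hn hv Xbar))
    _ = E2 + ((∫ ω, |(Xbar ω - μ) * ∑ k ∈ S, (X k ω - μ)|)
          + ∫ ω, |(Xbar ω - μ) * ∑ k ∈ S', (X k ω - μ)|) / N := by
        rw [integral_add hu.integrable_sq hcross, integral_div, integral_add (hprod S) (hprod S')]
    _ ≤ E2 + (√E2 * √(c * N) + √E2 * √(c * N)) / N := by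
        gcongr <;> refine integral_abs_mul_sum_Icc_le hmeas hsq hc hrect hu ?_
        exacts [card_Icc_le_pow le_rfl fun i => by simpa using hv i,
          card_Icc_le_pow (fun i => by simpa using hv i) le_rfl]
    _ = _ := by
        rw [← two_mul, mul_div_assoc, sqrt_mul_sqrt_mul_pow_div_pow (by positivity) d c
          (integral_nonneg fun _ => sq_nonneg _)]
        ring

end RandomField

theorem stmt_15_general {Ω : Type*} [MeasureSpace Ω]
    (d : ℕ) (n q : ℕ) (hq : 1 ≤ q) (hqn : q ≤ n)
    (X : (Fin d → ℤ) → Ω → ℝ) (μ : ℝ) (c : ℝ) (hc : 0 ≤ c)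
    (hmeas : ∀ k, Measurable (X k))
    (hint : ∀ k k' : Fin d → ℤ, Integrable (fun ω => (X k ω - μ) * (X k' ω - μ)))
    (hrect : ∀ s t : Fin d → ℤ, s ≤ t →
      ∫ ω, (∑ k ∈ Finset.Icc s t, (X k ω - μ)) ^ 2
        ≤ c * ∏ i, ((t i - s i + 1 : ℤ) : ℝ))
    (Xbar : Ω → ℝ)
    (hXbar : ∀ ω, Xbar ω
      = (∑ k ∈ Finset.Icc (1 : Fin d → ℤ) (fun _ => (n : ℤ)), X k ω) / (n : ℝ) ^ d)
    (rhat rtil : (Fin d → ℤ) → Ω → ℝ)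
    (hrhat : ∀ j ω, rhat j ω
      = (∑ k ∈ Finset.Icc (1 : Fin d → ℤ) (fun i => (n : ℤ) - |j i|),
          (X k ω - Xbar ω) * (X (k + fun i => |j i|) ω - Xbar ω)) / (n : ℝ) ^ d)
    (hrtil : ∀ j ω, rtil j ω
      = (∑ k ∈ Finset.Icc (1 : Fin d → ℤ) (fun i => (n : ℤ) - |j i|),
          (X k ω - μ) * (X (k + fun i => |j i|) ω - μ)) / (n : ℝ) ^ d)
    (E2 : ℝ) (hE2 : E2 = ∫ ω, (Xbar ω - μ) ^ 2) :
    (∀ j ∈ Finset.Icc (fun _ => -((n : ℤ) - 1)) (fun _ => (n : ℤ) - 1),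
      ∫ ω, |rhat j ω - rtil j ω|
        ≤ E2 + 2 * (n : ℝ) ^ (-(d : ℝ) / 2) * Real.sqrt (c * E2))
    ∧ (∑ j ∈ Finset.Icc (fun _ => -((q : ℤ) - 1)) (fun _ => (q : ℤ) - 1),
        ∫ ω, |rhat j ω - rtil j ω|)
      ≤ (2 * (q : ℝ) - 1) ^ d *
        (E2 + 2 * (n : ℝ) ^ (-(d : ℝ) / 2) * Real.sqrt (c * E2)) := by
  have key : ∀ j,
      ∫ ω, |rhat j ω - rtil j ω| ≤ E2 + 2 * (n : ℝ) ^ (-(d : ℝ) / 2) * √(c * E2) := by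
    intro j
    have hr : ∀ ω, rhat j ω - rtil j ω = empiricalCov X n Xbar (fun i => |j i|) ω
        - empiricalCov X n (fun _ => μ) (fun i => |j i|) ω := fun ω => by
      rw [hrhat, hrtil]
      rfl
    simp_rw [hr, hE2]
    exact integral_abs_empiricalCov_sub_le hmeas (fun k => hint k k) hc hrect (hq.trans hqn) hXbar
      fun i => abs_nonneg (j i)
  refine ⟨fun j _ => key j, ?_⟩
  calc _ ≤ _ • _ := sum_le_card_nsmul _ _ _ fun j _ => key j
    _ = _ := by
      rw [nsmul_eq_mul, card_Icc_neg_const hq, Nat.cast_pow, Nat.cast_sub (by omega)]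
      push_cast
      ring

/-- Bound on the difference between the empirical covariance computed with the
sample mean and the one computed with the true mean:
`E|r̂(j) - r̃(j)| ≤ E(X̄_n - μ)² + 2 n^{-d/2} √(c E(X̄_n - μ)²)` for every
`j ∈ B_{n-1}`, and summing over `B_{q-1}` gives the factor `(2q-1)^d`. -/
theorem stmt_15 {Ω : Type*} [MeasureSpace Ω] [IsProbabilityMeasure (volume : Measure Ω)]
    (d : ℕ) (hd : 0 < d) (n q : ℕ) (hq : 1 ≤ q) (hqn : q ≤ n)
    (X : (Fin d → ℤ) → Ω → ℝ) (μ : ℝ) (c : ℝ) (hc : 0 ≤ c)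
    (hmeas : ∀ k, Measurable (X k))
    (hint : ∀ k k' : Fin d → ℤ, Integrable (fun ω => (X k ω - μ) * (X k' ω - μ)))
    (hrect : ∀ s t : Fin d → ℤ, s ≤ t →
      ∫ ω, (∑ k ∈ Finset.Icc s t, (X k ω - μ)) ^ 2
        ≤ c * ∏ i, ((t i - s i + 1 : ℤ) : ℝ))
    (Xbar : Ω → ℝ)
    (hXbar : ∀ ω, Xbar ω
      = (∑ k ∈ Finset.Icc (1 : Fin d → ℤ) (fun _ => (n : ℤ)), X k ω) / (n : ℝ) ^ d)
    (rhat rtil : (Fin d → ℤ) → Ω → ℝ)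
    (hrhat : ∀ j ω, rhat j ω
      = (∑ k ∈ Finset.Icc (1 : Fin d → ℤ) (fun i => (n : ℤ) - |j i|),
          (X k ω - Xbar ω) * (X (k + fun i => |j i|) ω - Xbar ω)) / (n : ℝ) ^ d)
    (hrtil : ∀ j ω, rtil j ω
      = (∑ k ∈ Finset.Icc (1 : Fin d → ℤ) (fun i => (n : ℤ) - |j i|),
          (X k ω - μ) * (X (k + fun i => |j i|) ω - μ)) / (n : ℝ) ^ d)
    (E2 : ℝ) (hE2 : E2 = ∫ ω, (Xbar ω - μ) ^ 2) :
    (∀ j ∈ Finset.Icc (fun _ => -((n : ℤ) - 1)) (fun _ => (n : ℤ) - 1),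
      ∫ ω, |rhat j ω - rtil j ω|
        ≤ E2 + 2 * (n : ℝ) ^ (-(d : ℝ) / 2) * Real.sqrt (c * E2))
    ∧ (∑ j ∈ Finset.Icc (fun _ => -((q : ℤ) - 1)) (fun _ => (q : ℤ) - 1),
        ∫ ω, |rhat j ω - rtil j ω|)
      ≤ (2 * (q : ℝ) - 1) ^ d *
        (E2 + 2 * (n : ℝ) ^ (-(d : ℝ) / 2) * Real.sqrt (c * E2)) :=
  stmt_15_general d n q hq hqn X μ c hc hmeas hint hrect Xbar hXbar rhat rtil hrhat hrtil E2 hE2
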